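/- For every k ≥ 1, every permutation π of length k that avoids both 213 and 312 is ES⁺-irreducible with respect to B = {2413, 3142}; that is, no entry of π is ES⁺-reducible with respect to B. -/

import Mathlib

/-- A permutation of arbitrary length: a length `n` together with a
bijection of `Fin n` (0-indexed positions and values). -/
abbrev PermAny : Type := Σ n : ℕ, Equiv.Perm (Fin n)

/-- `β` is contained as a pattern in `π`. -/
def ContainsPat {k n : ℕ} (β : Equiv.Perm (Fin k)) (π : Equiv.Perm (Fin n)) : Prop :=
  ∃ f : Fin k → Fin n, StrictMono f ∧ ∀ a b : Fin k, β a < β b ↔ π (f a) < π (f b)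

/-- `Av(B)`: the permutations avoiding every member of `B`. -/
def AvSet (B : Set PermAny) : Set PermAny :=
  {p | ∀ b ∈ B, ¬ ContainsPat b.2 p.2}

/-- A permutation class: closed downwards under pattern containment. -/
def IsPermClass (C : Set PermAny) : Prop :=
  ∀ p ∈ C, ∀ q : PermAny, ContainsPat q.2 p.2 → q ∈ C

/-- The positions `a,…,b` form an interval of `π`: the corresponding values
form a set of consecutive integers. -/
def IsIntervalAt {n : ℕ} (π : Equiv.Perm (Fin n)) (a b : Fin n) : Prop :=
  a ≤ b ∧ ∃ c : ℕ,
    (Finset.Icc a b).image (fun i => (π i : ℕ)) = Finset.Icc c (c + ((b : ℕ) - (a : ℕ)))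

/-- A permutation is simple when all of its intervals are trivial. -/
def IsSimplePerm {n : ℕ} (π : Equiv.Perm (Fin n)) : Prop :=
  ∀ a b : Fin n, IsIntervalAt π a b → a = b ∨ ((a : ℕ) = 0 ∧ (b : ℕ) = n - 1)

/-- `Z(B;π;g)`: the set of `B`-avoiding permutations of length `k + ‖g‖` whose
`k` smallest values occupy the positions prescribed by the gap vector `g`
and form the pattern `π`.  (0-indexed: entry `π r` sits at position
`g 0 + ⋯ + g r + r`.) -/
def ZSet (B : Set PermAny) {k : ℕ} (π : Equiv.Perm (Fin k)) (g : Fin (k + 1) → ℕ) :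
    Set (Equiv.Perm (Fin (k + ∑ j, g j))) :=
  {p | (⟨k + ∑ j, g j, p⟩ : PermAny) ∈ AvSet B ∧
    ∀ r : Fin k, ∀ i : Fin (k + ∑ j, g j),
      (i : ℕ) = (∑ j ∈ Finset.univ.filter fun j : Fin (k + 1) => (j : ℕ) ≤ (r : ℕ), g j)
          + (r : ℕ) →
      (p i : ℕ) = (π r : ℕ)}

/-- `J(π)`: the set of gap positions `j` such that `Z(B;π;g)` is empty whenever
`g j > 0`. -/
def JSet (B : Set PermAny) {k : ℕ} (π : Equiv.Perm (Fin k)) : Set (Fin (k + 1)) :=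
  {j | ∀ g : Fin (k + 1) → ℕ, 0 < g j → ZSet B π g = ∅}

/-- `d_r(π)`: delete the entry at position `r` from `π` and standardize. -/
def delEntry {k : ℕ} (π : Equiv.Perm (Fin (k + 1))) (r : Fin (k + 1)) : Equiv.Perm (Fin k) :=
  Equiv.removeNone ((finSuccEquiv' r).symm.trans (π.trans (finSuccEquiv' (π r))))

/-- `d_r(g)`: merge the gaps on either side of position `r`. -/
def delGap {k : ℕ} (g : Fin (k + 2) → ℕ) (r : Fin (k + 1)) : Fin (k + 1) → ℕ :=
  fun j =>
    if (j : ℕ) < (r : ℕ) then g (Fin.castSucc j)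
    else if (j : ℕ) = (r : ℕ) then g (Fin.castSucc j) + g j.succ
    else g j.succ

/-- The entry `π r` is ES-reducible for `π` with respect to `B`
(Zeilberger's original notion). -/
def ESRed (B : Set PermAny) {k : ℕ} (π : Equiv.Perm (Fin (k + 1))) (r : Fin (k + 1)) : Prop :=
  ∀ g : Fin (k + 2) → ℕ, (∀ j ∈ JSet B π, g j = 0) →
    (ZSet B π g).ncard = (ZSet B (delEntry π r) (delGap g r)).ncard

/-- The entry `π r` is ES⁺-reducible for `π` with respect to `B`. -/
def ESPlusRed (B : Set PermAny) {k : ℕ} (π : Equiv.Perm (Fin (k + 1))) (r : Fin (k + 1)) : Prop :=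
  ∀ g : Fin (k + 2) → ℕ, (ZSet B π g).Nonempty →
    (ZSet B π g).ncard = (ZSet B (delEntry π r) (delGap g r)).ncard

/-- `G_r(π)`: the largest lower order ideal of gap vectors `g` such that for all
`h ≤ g`, either `Z(B;π;h)` is nonempty or `Z(B;d_r(π);d_r(h))` is empty. -/
def GrSet (B : Set PermAny) {k : ℕ} (π : Equiv.Perm (Fin (k + 1))) (r : Fin (k + 1)) :
    Set (Fin (k + 2) → ℕ) :=
  {g | ∀ h : Fin (k + 2) → ℕ, h ≤ g →
    (ZSet B π h).Nonempty ∨ ZSet B (delEntry π r) (delGap h r) = ∅}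

noncomputable def p213 : Equiv.Perm (Fin 3) := Equiv.ofBijective ![1, 0, 2] (by decide)
noncomputable def p312 : Equiv.Perm (Fin 3) := Equiv.ofBijective ![2, 0, 1] (by decide)
noncomputable def p2413 : Equiv.Perm (Fin 4) := Equiv.ofBijective ![1, 3, 0, 2] (by decide)
noncomputable def p3142 : Equiv.Perm (Fin 4) := Equiv.ofBijective ![2, 0, 3, 1] (by decide)

namespace ES9
open Equiv

variable {m : ℕ}

lemma succAbove_val {n : ℕ} (p : Fin (n+1)) (i : Fin n) :
    (p.succAbove i : ℕ) = if (i:ℕ) < (p:ℕ) then (i:ℕ) else (i:ℕ)+1 := by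
  rw [Fin.succAbove]
  split_ifs with h1 h2 h2 <;>
    simp_all [Fin.lt_def, Fin.castSucc, Fin.succ, Fin.castAdd, Fin.castLE] <;> omega

/-- delete the entry at position `i` (same construction as `delEntry`). -/
noncomputable def del {n : ℕ} (σ : Equiv.Perm (Fin (n+1))) (i : Fin (n+1)) :
    Equiv.Perm (Fin n) :=
  Equiv.removeNone ((finSuccEquiv' i).symm.trans (σ.trans (finSuccEquiv' (σ i))))

lemma del_bridge {n : ℕ} (σ : Equiv.Perm (Fin (n+1))) (i : Fin (n+1)) (a : Fin n) :
    σ (i.succAbove a) = (σ i).succAbove (del σ i a) := by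
  set e := (finSuccEquiv' i).symm.trans (σ.trans (finSuccEquiv' (σ i))) with he
  have h1 : e (some a) = finSuccEquiv' (σ i) (σ (i.succAbove a)) := by
    simp [he, finSuccEquiv'_symm_some]
  have hne : σ (i.succAbove a) ≠ σ i := fun h => (Fin.succAbove_ne i a) (σ.injective h)
  have h2 : ∃ x', e (some a) = some x' := by
    rw [h1]
    rcases h3 : finSuccEquiv' (σ i) (σ (i.succAbove a)) with _ | x'
    · exact absurd ((finSuccEquiv' (σ i)).injective (h3.trans (finSuccEquiv'_at (σ i)).symm)) hne
    · exact ⟨x', rfl⟩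
  have h4 := Equiv.removeNone_some e h2
  rw [h1] at h4
  have := congrArg (finSuccEquiv' (σ i)).symm h4
  have h5 : σ (i.succAbove a) = (σ i).succAbove (e.removeNone a) := by
    simpa [finSuccEquiv'_symm_some] using this.symm
  exact h5

lemma del_inj {n : ℕ} (σ τ : Equiv.Perm (Fin (n+1))) (i : Fin (n+1)) (hv : σ i = τ i)
    (hd : del σ i = del τ i) : σ = τ := by
  ext x
  rcases eq_or_ne x i with rfl | hx
  · exact congrArg Fin.val hv
  · obtain ⟨a, rfl⟩ := Fin.exists_succAbove_eq hx
    have key : σ (i.succAbove a) = τ (i.succAbove a) := by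
      rw [del_bridge σ i a, del_bridge τ i a, hd, hv]
    exact congrArg Fin.val key

lemma containsPat_del {k n : ℕ} (b : Equiv.Perm (Fin k)) (σ : Equiv.Perm (Fin (n+1)))
    (i : Fin (n+1)) (h : ContainsPat b (del σ i)) :
    ∃ f : Fin k → Fin (n+1), StrictMono f ∧ (∀ t, f t ≠ i) ∧
      ∀ a c, b a < b c ↔ σ (f a) < σ (f c) := by
  obtain ⟨f, hm, hiff⟩ := h
  refine ⟨fun t => i.succAbove (f t), fun a c hac => ?_, fun t => Fin.succAbove_ne i (f t),
    fun a c => ?_⟩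
  · exact Fin.strictMono_succAbove i (hm hac)
  · rw [hiff a c, del_bridge σ i (f a), del_bridge σ i (f c)]
    exact (Fin.succAbove_lt_succAbove_iff (p := σ i)).symm

lemma permCongr_val {N M : ℕ} (h : N = M) (σ : Equiv.Perm (Fin N)) (x : Fin N) :
    (((finCongr h).permCongr σ) (finCongr h x) : ℕ) = (σ x : ℕ) := by
  rw [Equiv.permCongr_apply, Equiv.symm_apply_apply]; rfl

lemma containsPat_finCongr {N M k : ℕ} (h : N = M) (b : Equiv.Perm (Fin k))
    (σ : Equiv.Perm (Fin N)) :
    ContainsPat b ((finCongr h).permCongr σ) ↔ ContainsPat b σ := by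
  have cc : ∀ x : Fin M, finCongr h (finCongr h.symm x) = x := fun x => rfl
  have key : ∀ x y : Fin N, σ x < σ y ↔
      ((finCongr h).permCongr σ) (finCongr h x) < ((finCongr h).permCongr σ) (finCongr h y) := by
    intro x y
    rw [Fin.lt_def, Fin.lt_def, permCongr_val h σ x, permCongr_val h σ y]
  constructor
  · rintro ⟨f, hm, hiff⟩
    refine ⟨fun t => finCongr h.symm (f t), fun a c hac => ?_, fun a c => ?_⟩
    · have := hm hac
      rw [Fin.lt_def] at this ⊢
      exact this
    · rw [hiff a c, key, cc, cc]
  · rintro ⟨f, hm, hiff⟩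
    refine ⟨fun t => finCongr h (f t), fun a c hac => ?_, fun a c => ?_⟩
    · have := hm hac
      rw [Fin.lt_def] at this ⊢
      exact this
    · rw [hiff a c, key]

lemma p2413_val : ∀ t : Fin 4, (p2413 t : ℕ) = ![1,3,0,2] t := by
  intro t; fin_cases t <;> rfl

lemma p3142_val : ∀ t : Fin 4, (p3142 t : ℕ) = ![2,0,3,1] t := by
  intro t; fin_cases t <;> rfl

lemma p213_val : ∀ t : Fin 3, (p213 t : ℕ) = ![1,0,2] t := by
  intro t; fin_cases t <;> rfl

lemma p312_val : ∀ t : Fin 3, (p312 t : ℕ) = ![2,0,1] t := by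
  intro t; fin_cases t <;> rfl


lemma quad_2413 {N : ℕ} (σ : Equiv.Perm (Fin N)) (f : Fin 4 → Fin N) (hf : StrictMono f)
    (hiff : ∀ a b : Fin 4, p2413 a < p2413 b ↔ σ (f a) < σ (f b)) :
    f 0 < f 1 ∧ f 1 < f 2 ∧ f 2 < f 3 ∧
      σ (f 2) < σ (f 0) ∧ σ (f 0) < σ (f 3) ∧ σ (f 3) < σ (f 1) := by
  refine ⟨hf (by decide), hf (by decide), hf (by decide), ?_, ?_, ?_⟩
  · exact (hiff 2 0).mp (by decide)
  · exact (hiff 0 3).mp (by decide)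
  · exact (hiff 3 1).mp (by decide)

lemma quad_3142 {N : ℕ} (σ : Equiv.Perm (Fin N)) (f : Fin 4 → Fin N) (hf : StrictMono f)
    (hiff : ∀ a b : Fin 4, p3142 a < p3142 b ↔ σ (f a) < σ (f b)) :
    f 0 < f 1 ∧ f 1 < f 2 ∧ f 2 < f 3 ∧
      σ (f 1) < σ (f 3) ∧ σ (f 3) < σ (f 0) ∧ σ (f 0) < σ (f 2) := by
  refine ⟨hf (by decide), hf (by decide), hf (by decide), ?_, ?_, ?_⟩
  · exact (hiff 1 3).mp (by decide)
  · exact (hiff 3 0).mp (by decide)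
  · exact (hiff 0 2).mp (by decide)

lemma contains213_of {N : ℕ} (σ : Equiv.Perm (Fin N)) (i0 i1 i2 : Fin N)
    (h01 : i0 < i1) (h12 : i1 < i2) (k1 : σ i1 < σ i0) (k2 : σ i0 < σ i2) :
    ContainsPat p213 σ := by
  have t1 : σ i1 < σ i2 := k1.trans k2
  refine ⟨![i0, i1, i2], ?_, ?_⟩
  · intro a b hab
    fin_cases a <;> fin_cases b <;>
      first
        | exact absurd hab (by decide)
        | simpa using h01
        | simpa using h12
        | simpa using h01.trans h12
  · intro a b
    fin_cases a <;> fin_cases b <;>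
      simp [p213] <;>
      first
        | exact k1 | exact k2 | exact t1
        | exact k1.le | exact k2.le | exact t1.le
lemma contains312_of {N : ℕ} (σ : Equiv.Perm (Fin N)) (i0 i1 i2 : Fin N)
    (h01 : i0 < i1) (h12 : i1 < i2) (k1 : σ i1 < σ i2) (k2 : σ i2 < σ i0) :
    ContainsPat p312 σ := by
  have t1 : σ i1 < σ i0 := k1.trans k2
  refine ⟨![i0, i1, i2], ?_, ?_⟩
  · intro a b hab
    fin_cases a <;> fin_cases b <;>
      first
        | exact absurd hab (by decide)
        | simpa using h01
        | simpa using h12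
        | simpa using h01.trans h12
  · intro a b
    fin_cases a <;> fin_cases b <;>
      simp [p312] <;>
      first
        | exact k1 | exact k2 | exact t1
        | exact k1.le | exact k2.le | exact t1.le

lemma contains2413_of {N : ℕ} (σ : Equiv.Perm (Fin N)) (i0 i1 i2 i3 : Fin N)
    (h01 : i0 < i1) (h12 : i1 < i2) (h23 : i2 < i3)
    (k1 : σ i2 < σ i0) (k2 : σ i0 < σ i3) (k3 : σ i3 < σ i1) :
    ContainsPat p2413 σ := by
  have t1 : σ i2 < σ i3 := k1.trans k2
  have t2 : σ i0 < σ i1 := k2.trans k3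
  have t3 : σ i2 < σ i1 := t1.trans k3
  refine ⟨![i0, i1, i2, i3], ?_, ?_⟩
  · intro a b hab
    fin_cases a <;> fin_cases b <;>
      first
        | exact absurd hab (by decide)
        | simpa using h01
        | simpa using h12
        | simpa using h23
        | simpa using h01.trans h12
        | simpa using h12.trans h23
        | simpa using (h01.trans h12).trans h23
  · intro a b
    fin_cases a <;> fin_cases b <;>
      simp [p2413] <;>
      first
        | exact k1 | exact k2 | exact k3 | exact t1 | exact t2 | exact t3
        | exact k1.le | exact k2.le | exact k3.le
        | exact t1.le | exact t2.le | exact t3.le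


variable (π : Equiv.Perm (Fin (m+1))) (r : Fin (m+1))

/-- prescribed position of small entry `s` in the long permutation. -/
def P (R s : ℕ) : ℕ := if s < R then s else if s = R then R + 2 else s + 3

/-- prescribed position of small entry `s` in the short (deleted) permutation. -/
def P' (R s : ℕ) : ℕ := if s < R then s else s + 3

lemma P_lt_iff {R s t : ℕ} : P R s < P R t ↔ s < t := by
  unfold P; split_ifs <;> omega

lemma P_lt (s : Fin (m+1)) : P (r:ℕ) (s:ℕ) < m + 4 := by
  have h1 := s.isLt; have h2 := r.isLt; unfold P; split_ifs <;> omega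

/-- the long permutation with big entries `b0 b1 b3` at positions `r, r+1, r+3`,
`π r` at `r+2` and the rest of `π` elsewhere. -/
def pbF (b0 b1 b3 : Fin (m+4)) : Fin (m+4) → Fin (m+4) := fun i =>
  if h : (i:ℕ) < (r:ℕ) then
    Fin.castLE (by omega) (π ⟨(i:ℕ), by have := r.isLt; omega⟩)
  else if (i:ℕ) = (r:ℕ) then b0
  else if (i:ℕ) = (r:ℕ)+1 then b1
  else if (i:ℕ) = (r:ℕ)+2 then Fin.castLE (by omega) (π r)
  else if (i:ℕ) = (r:ℕ)+3 then b3
  else Fin.castLE (by omega) (π ⟨(i:ℕ)-3, by have := i.isLt; have := r.isLt; omega⟩)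

variable (b0 b1 b3 : Fin (m+4)) (hb0 : m+1 ≤ (b0:ℕ)) (hb1 : m+1 ≤ (b1:ℕ)) (hb3 : m+1 ≤ (b3:ℕ))
  (d01 : (b0:ℕ) ≠ (b1:ℕ)) (d03 : (b0:ℕ) ≠ (b3:ℕ)) (d13 : (b1:ℕ) ≠ (b3:ℕ))

include hb0 hb1 hb3 d01 d03 d13 in
lemma pbF_inj : Function.Injective (pbF π r b0 b1 b3) := by
  intro i j hij
  have hi4 := i.isLt; have hj4 := j.isLt; have hr := r.isLt
  have hval : (pbF π r b0 b1 b3 i : ℕ) = (pbF π r b0 b1 b3 j : ℕ) := congrArg Fin.val hij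
  have hπb : ∀ a : Fin (m+1), (π a : ℕ) < m + 1 := fun a => (π a).isLt
  have hπinjN : ∀ x y (hx : x < m+1) (hy : y < m+1),
      (π ⟨x,hx⟩ : ℕ) = (π ⟨y,hy⟩ : ℕ) → x = y := by
    intro x y hx hy h
    have := π.injective (Fin.val_injective h)
    exact congrArg Fin.val this
  unfold pbF at hval
  apply Fin.ext
  split_ifs at hval with c1 c2 c3 c4 c5 d1 d2 d3 d4 d5 <;>
    (try simp only [Fin.coe_castLE] at hval) <;>
    first
      | omega
      | (exact absurd hval (by have := hπb ⟨(i:ℕ), by omega⟩; omega))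
      | (exact absurd hval (by have := hπb ⟨(j:ℕ), by omega⟩; omega))
      | (exact absurd hval (by have := hπb ⟨(i:ℕ)-3, by omega⟩; omega))
      | (exact absurd hval (by have := hπb ⟨(j:ℕ)-3, by omega⟩; omega))
      | (exact absurd hval (by have := hπb r; omega))
      | (exact absurd hval.symm (by have := hπb ⟨(i:ℕ), by omega⟩; omega))
      | (exact absurd hval.symm (by have := hπb ⟨(j:ℕ), by omega⟩; omega))
      | (exact absurd hval.symm (by have := hπb ⟨(i:ℕ)-3, by omega⟩; omega))
      | (exact absurd hval.symm (by have := hπb ⟨(j:ℕ)-3, by omega⟩; omega))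
      | (exact absurd hval.symm (by have := hπb r; omega))
      | (have := hπinjN _ _ _ _ hval; omega)

include hb0 hb1 hb3 d01 d03 d13 in
lemma pbF_bij : Function.Bijective (pbF π r b0 b1 b3) :=
  Finite.injective_iff_bijective.mp (pbF_inj π r b0 b1 b3 hb0 hb1 hb3 d01 d03 d13)

variable {π r b0 b1 b3}

/-- value of `pbF` at a prescribed small position. -/
lemma pbF_small (s : Fin (m+1)) (i : Fin (m+4)) (hi : (i:ℕ) = P (r:ℕ) (s:ℕ)) :
    (pbF π r b0 b1 b3 i : ℕ) = (π s : ℕ) := by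
  have hr := r.isLt; have hs := s.isLt
  rcases lt_trichotomy (s:ℕ) (r:ℕ) with h | h | h
  · have hi' : (i:ℕ) = (s:ℕ) := by unfold P at hi; split_ifs at hi <;> omega
    unfold pbF
    rw [dif_pos (show (i:ℕ) < (r:ℕ) by omega)]
    simp only [Fin.coe_castLE]
    exact congrArg (fun a => ((π a : Fin (m+1)) : ℕ)) (Fin.ext hi')
  · have hi' : (i:ℕ) = (r:ℕ)+2 := by unfold P at hi; split_ifs at hi <;> omega
    unfold pbF
    rw [dif_neg (by omega), if_neg (by omega), if_neg (by omega), if_pos hi']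
    simp only [Fin.coe_castLE]
    exact congrArg (fun a => ((π a : Fin (m+1)) : ℕ)) (Fin.ext (by omega))
  · have hi' : (i:ℕ) = (s:ℕ)+3 := by unfold P at hi; split_ifs at hi <;> omega
    unfold pbF
    rw [dif_neg (by omega), if_neg (by omega), if_neg (by omega), if_neg (by omega),
      if_neg (by omega)]
    simp only [Fin.coe_castLE]
    exact congrArg (fun a => ((π a : Fin (m+1)) : ℕ)) (Fin.ext (show (i:ℕ)-3 = (s:ℕ) by omega))

lemma pbF_b0 (i : Fin (m+4)) (hi : (i:ℕ) = (r:ℕ)) :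
    pbF π r b0 b1 b3 i = b0 := by
  unfold pbF; split_ifs <;> omega

lemma pbF_b1 (i : Fin (m+4)) (hi : (i:ℕ) = (r:ℕ)+1) :
    pbF π r b0 b1 b3 i = b1 := by
  unfold pbF; split_ifs <;> omega

lemma pbF_b3 (i : Fin (m+4)) (hi : (i:ℕ) = (r:ℕ)+3) :
    pbF π r b0 b1 b3 i = b3 := by
  unfold pbF; split_ifs <;> omega

/-- every position is a prescribed small position or one of the three big positions. -/
lemma zone (i : Fin (m+4)) :
    (∃ s : Fin (m+1), (i:ℕ) = P (r:ℕ) (s:ℕ)) ∨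
      (i:ℕ) = (r:ℕ) ∨ (i:ℕ) = (r:ℕ)+1 ∨ (i:ℕ) = (r:ℕ)+3 := by
  have hi := i.isLt; have hr := r.isLt
  rcases lt_trichotomy (i:ℕ) (r:ℕ) with h | h | h
  · refine Or.inl ⟨⟨(i:ℕ), by omega⟩, ?_⟩
    show (i:ℕ) = P (r:ℕ) (i:ℕ)
    unfold P; split_ifs <;> omega
  · exact Or.inr (Or.inl h)
  · rcases eq_or_ne (i:ℕ) ((r:ℕ)+1) with h1 | h1
    · exact Or.inr (Or.inr (Or.inl h1))
    · rcases eq_or_ne (i:ℕ) ((r:ℕ)+2) with h2 | h2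
      · exact Or.inl ⟨r, by unfold P; split_ifs <;> omega⟩
      · rcases eq_or_ne (i:ℕ) ((r:ℕ)+3) with h3 | h3
        · exact Or.inr (Or.inr (Or.inr h3))
        · refine Or.inl ⟨⟨(i:ℕ)-3, by omega⟩, ?_⟩
          show (i:ℕ) = P (r:ℕ) ((i:ℕ)-3)
          unfold P; split_ifs <;> omega


variable (π r)

lemma P_cases {R s i : ℕ} (h : i = P R s) :
    (s < R ∧ i = s) ∨ (s = R ∧ i = R+2) ∨ (R < s ∧ i = s+3) := by
  unfold P at h; split_ifs at h <;> omega

section Core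

variable (h213 : ¬ ContainsPat p213 π) (h312 : ¬ ContainsPat p312 π)
variable (σ : Equiv.Perm (Fin (m+4)))
variable (hsm : ∀ (s : Fin (m+1)) (i : Fin (m+4)), (i:ℕ) = P (r:ℕ) (s:ℕ) → (σ i:ℕ) = (π s:ℕ))

include hsm in
lemma small_of (i : Fin (m+4)) (h : (σ i:ℕ) < m+1) :
    (∃ s : Fin (m+1), (i:ℕ) = P (r:ℕ) (s:ℕ) ∧ (σ i:ℕ) = (π s:ℕ)) ∨
      (i:ℕ) = (r:ℕ) ∨ (i:ℕ) = (r:ℕ)+1 ∨ (i:ℕ) = (r:ℕ)+3 := by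
  rcases zone (r := r) i with ⟨s, hs⟩ | h' | h' | h'
  · exact Or.inl ⟨s, hs, hsm s i hs⟩
  · exact Or.inr (Or.inl h')
  · exact Or.inr (Or.inr (Or.inl h'))
  · exact Or.inr (Or.inr (Or.inr h'))

-- the three variants of big values
variable (hV0 : ∀ i : Fin (m+4), (i:ℕ) = (r:ℕ) → (σ i:ℕ) = m+1)
variable (hV1 : ∀ i : Fin (m+4), (i:ℕ) = (r:ℕ)+1 → (σ i:ℕ) = m+2)
variable (hV3 : ∀ i : Fin (m+4), (i:ℕ) = (r:ℕ)+3 → (σ i:ℕ) = m+3)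

include h213 hsm hV0 hV1 hV3 in
/-- `asc` variant avoids 2413. -/
lemma asc_no2413 : ¬ ContainsPat p2413 σ := by
  rintro ⟨f, hf, hiff⟩
  obtain ⟨o01, o12, o23, w1, w2, w3⟩ := quad_2413 σ f hf hiff
  set i0 := f 0; set i1 := f 1; set i2 := f 2; set i3 := f 3
  rw [Fin.lt_def] at o01 o12 o23 w1 w2 w3
  have hπlt : ∀ s : Fin (m+1), (π s : ℕ) < m+1 := fun s => (π s).isLt
  -- if a value is < m+1, its position is a small position
  have hS : ∀ i : Fin (m+4), (σ i:ℕ) < m+1 →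
      ∃ s : Fin (m+1), (i:ℕ) = P (r:ℕ) (s:ℕ) ∧ (σ i:ℕ) = (π s:ℕ) := by
    intro i h
    rcases small_of π r σ hsm i h with h' | h' | h' | h'
    · exact h'
    · exact absurd (hV0 i h') (by omega)
    · exact absurd (hV1 i h') (by omega)
    · exact absurd (hV3 i h') (by omega)
  -- the 213 contradiction when i0, i2, i3 are all small
  have h213' : ¬ ((σ i3 : ℕ) < m+1) := by
    intro h3
    obtain ⟨s3, hp3, hv3'⟩ := hS i3 h3
    obtain ⟨s0, hp0, hv0'⟩ := hS i0 (by omega)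
    obtain ⟨s2, hp2, hv2'⟩ := hS i2 (by omega)
    have hlt02 : (s0:ℕ) < (s2:ℕ) := by
      rcases P_cases hp0 with ⟨a,b⟩|⟨a,b⟩|⟨a,b⟩ <;>
        rcases P_cases hp2 with ⟨c,d⟩|⟨c,d⟩|⟨c,d⟩ <;> omega
    have hlt23 : (s2:ℕ) < (s3:ℕ) := by
      rcases P_cases hp2 with ⟨a,b⟩|⟨a,b⟩|⟨a,b⟩ <;>
        rcases P_cases hp3 with ⟨c,d⟩|⟨c,d⟩|⟨c,d⟩ <;> omega
    exact h213 (contains213_of π s0 s2 s3 (Fin.lt_def.mpr hlt02) (Fin.lt_def.mpr hlt23)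
      (Fin.lt_def.mpr (by omega)) (Fin.lt_def.mpr (by omega)))
  -- hence i3 and i1 are big
  have hb3 : ¬ ((σ i3:ℕ) < m+1) := h213'
  have hb1 : ¬ ((σ i1:ℕ) < m+1) := by omega
  have big1 : (i1:ℕ) = (r:ℕ) ∨ (i1:ℕ) = (r:ℕ)+1 ∨ (i1:ℕ) = (r:ℕ)+3 := by
    rcases zone (r := r) i1 with ⟨s, hs⟩ | h | h | h
    · exact absurd (hsm s i1 hs) (by have := hπlt s; omega)
    · exact Or.inl h
    · exact Or.inr (Or.inl h)
    · exact Or.inr (Or.inr h)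
  have big3 : (i3:ℕ) = (r:ℕ) ∨ (i3:ℕ) = (r:ℕ)+1 ∨ (i3:ℕ) = (r:ℕ)+3 := by
    rcases zone (r := r) i3 with ⟨s, hs⟩ | h | h | h
    · exact absurd (hsm s i3 hs) (by have := hπlt s; omega)
    · exact Or.inl h
    · exact Or.inr (Or.inl h)
    · exact Or.inr (Or.inr h)
  rcases big1 with h | h | h <;> rcases big3 with h' | h' | h' <;>
    first
      | omega
      | (have := hV0 i1 h; have := hV1 i3 h'; omega)
      | (have := hV0 i1 h; have := hV3 i3 h'; omega)
      | (have := hV1 i1 h; have := hV3 i3 h'; omega)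
      | (have := hV1 i1 h; have := hV0 i3 h'; omega)
      | (have := hV3 i1 h; have := hV0 i3 h'; omega)
      | (have := hV3 i1 h; have := hV1 i3 h'; omega)

include h312 hsm hV0 hV1 hV3 in
/-- `asc` variant avoids 3142, given that no later small entry exceeds `π r`. -/
lemma asc_no3142 (hA : ∀ j : Fin (m+1), (r:ℕ) < (j:ℕ) → (π j:ℕ) < (π r:ℕ)) :
    ¬ ContainsPat p3142 σ := by
  rintro ⟨f, hf, hiff⟩
  obtain ⟨o01, o12, o23, w1, w2, w3⟩ := quad_3142 σ f hf hiff
  set i0 := f 0; set i1 := f 1; set i2 := f 2; set i3 := f 3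
  rw [Fin.lt_def] at o01 o12 o23 w1 w2 w3
  have hπlt : ∀ s : Fin (m+1), (π s : ℕ) < m+1 := fun s => (π s).isLt
  have hS : ∀ i : Fin (m+4), (σ i:ℕ) < m+1 →
      ∃ s : Fin (m+1), (i:ℕ) = P (r:ℕ) (s:ℕ) ∧ (σ i:ℕ) = (π s:ℕ) := by
    intro i h
    rcases small_of π r σ hsm i h with h' | h' | h' | h'
    · exact h'
    · exact absurd (hV0 i h') (by omega)
    · exact absurd (hV1 i h') (by omega)
    · exact absurd (hV3 i h') (by omega)
  have h312' : ¬ ((σ i0 : ℕ) < m+1) := by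
    intro h0
    obtain ⟨s0, hp0, hv0'⟩ := hS i0 h0
    obtain ⟨s1, hp1, hv1'⟩ := hS i1 (by omega)
    obtain ⟨s3, hp3, hv3'⟩ := hS i3 (by omega)
    have hlt01 : (s0:ℕ) < (s1:ℕ) := by
      rcases P_cases hp0 with ⟨a,b⟩|⟨a,b⟩|⟨a,b⟩ <;>
        rcases P_cases hp1 with ⟨c,d⟩|⟨c,d⟩|⟨c,d⟩ <;> omega
    have hlt13 : (s1:ℕ) < (s3:ℕ) := by
      rcases P_cases hp1 with ⟨a,b⟩|⟨a,b⟩|⟨a,b⟩ <;>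
        rcases P_cases hp3 with ⟨c,d⟩|⟨c,d⟩|⟨c,d⟩ <;> omega
    exact h312 (contains312_of π s0 s1 s3 (Fin.lt_def.mpr hlt01) (Fin.lt_def.mpr hlt13)
      (Fin.lt_def.mpr (by omega)) (Fin.lt_def.mpr (by omega)))
  have hb2 : ¬ ((σ i2:ℕ) < m+1) := by omega
  have big0 : (i0:ℕ) = (r:ℕ) ∨ (i0:ℕ) = (r:ℕ)+1 ∨ (i0:ℕ) = (r:ℕ)+3 := by
    rcases zone (r := r) i0 with ⟨s, hs⟩ | h | h | h
    · exact absurd (hsm s i0 hs) (by have := hπlt s; omega)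
    · exact Or.inl h
    · exact Or.inr (Or.inl h)
    · exact Or.inr (Or.inr h)
  have big2 : (i2:ℕ) = (r:ℕ) ∨ (i2:ℕ) = (r:ℕ)+1 ∨ (i2:ℕ) = (r:ℕ)+3 := by
    rcases zone (r := r) i2 with ⟨s, hs⟩ | h | h | h
    · exact absurd (hsm s i2 hs) (by have := hπlt s; omega)
    · exact Or.inl h
    · exact Or.inr (Or.inl h)
    · exact Or.inr (Or.inr h)
  -- the interesting cases: (r, r+3) and (r+1, r+3)
  have key : ∀ v0 : ℕ, (σ i0:ℕ) = v0 → v0 ≤ m+2 → (i2:ℕ) = (r:ℕ)+3 → False := by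
    intro v0 hv0 hvle h2
    -- i3 is a small position beyond r+3
    have hsm3 : ∃ s : Fin (m+1), (i3:ℕ) = P (r:ℕ) (s:ℕ) := by
      rcases zone (r := r) i3 with ⟨s, hs⟩ | h | h | h
      · exact ⟨s, hs⟩
      · omega
      · omega
      · omega
    obtain ⟨s3, hp3⟩ := hsm3
    have hv3' := hsm s3 i3 hp3
    have hs3 : (r:ℕ) < (s3:ℕ) := by
      rcases P_cases hp3 with ⟨a,b⟩|⟨a,b⟩|⟨a,b⟩ <;> omega
    -- i1 is a small position strictly between i0 and r+3, so it is r+2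
    obtain ⟨s1, hp1, hv1'⟩ := hS i1 (by have := hπlt s3; omega)
    have hs1 : (s1:ℕ) = (r:ℕ) := by
      rcases P_cases hp1 with ⟨a,b⟩|⟨a,b⟩|⟨a,b⟩ <;> omega
    have : s1 = r := Fin.ext hs1
    subst this
    have := hA s3 hs3
    omega
  rcases big0 with h | h | h <;> rcases big2 with h' | h' | h'
  · omega
  · omega
  · exact key (m+1) (hV0 i0 h) (by omega) h'
  · omega
  · omega
  · exact key (m+2) (hV1 i0 h) (by omega) h'
  · omega
  · omega
  · omega

include h213 hsm in
/-- `caseA` variant avoids 2413, given that no earlier small entry exceeds `π r`. -/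
lemma caseA_no2413 (hB : ∀ j : Fin (m+1), (j:ℕ) < (r:ℕ) → (π j:ℕ) < (π r:ℕ))
    (hA0 : ∀ i : Fin (m+4), (i:ℕ) = (r:ℕ) → (σ i:ℕ) = m+2)
    (hA1 : ∀ i : Fin (m+4), (i:ℕ) = (r:ℕ)+1 → (σ i:ℕ) = m+3)
    (hA3 : ∀ i : Fin (m+4), (i:ℕ) = (r:ℕ)+3 → (σ i:ℕ) = m+1) :
    ¬ ContainsPat p2413 σ := by
  rintro ⟨f, hf, hiff⟩
  obtain ⟨o01, o12, o23, w1, w2, w3⟩ := quad_2413 σ f hf hiff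
  set i0 := f 0; set i1 := f 1; set i2 := f 2; set i3 := f 3
  rw [Fin.lt_def] at o01 o12 o23 w1 w2 w3
  have hπlt : ∀ s : Fin (m+1), (π s : ℕ) < m+1 := fun s => (π s).isLt
  have hS : ∀ i : Fin (m+4), (σ i:ℕ) < m+1 →
      ∃ s : Fin (m+1), (i:ℕ) = P (r:ℕ) (s:ℕ) ∧ (σ i:ℕ) = (π s:ℕ) := by
    intro i h
    rcases small_of π r σ hsm i h with h' | h' | h' | h'
    · exact h'
    · exact absurd (hA0 i h') (by omega)
    · exact absurd (hA1 i h') (by omega)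
    · exact absurd (hA3 i h') (by omega)
  have h213' : ¬ ((σ i3 : ℕ) < m+1) := by
    intro h3
    obtain ⟨s3, hp3, hv3'⟩ := hS i3 h3
    obtain ⟨s0, hp0, hv0'⟩ := hS i0 (by omega)
    obtain ⟨s2, hp2, hv2'⟩ := hS i2 (by omega)
    have hlt02 : (s0:ℕ) < (s2:ℕ) := by
      rcases P_cases hp0 with ⟨a,b⟩|⟨a,b⟩|⟨a,b⟩ <;>
        rcases P_cases hp2 with ⟨c,d⟩|⟨c,d⟩|⟨c,d⟩ <;> omega
    have hlt23 : (s2:ℕ) < (s3:ℕ) := by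
      rcases P_cases hp2 with ⟨a,b⟩|⟨a,b⟩|⟨a,b⟩ <;>
        rcases P_cases hp3 with ⟨c,d⟩|⟨c,d⟩|⟨c,d⟩ <;> omega
    exact h213 (contains213_of π s0 s2 s3 (Fin.lt_def.mpr hlt02) (Fin.lt_def.mpr hlt23)
      (Fin.lt_def.mpr (by omega)) (Fin.lt_def.mpr (by omega)))
  have hb1 : ¬ ((σ i1:ℕ) < m+1) := by omega
  have big1 : (i1:ℕ) = (r:ℕ) ∨ (i1:ℕ) = (r:ℕ)+1 ∨ (i1:ℕ) = (r:ℕ)+3 := by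
    rcases zone (r := r) i1 with ⟨s, hs⟩ | h | h | h
    · exact absurd (hsm s i1 hs) (by have := hπlt s; omega)
    · exact Or.inl h
    · exact Or.inr (Or.inl h)
    · exact Or.inr (Or.inr h)
  have big3 : (i3:ℕ) = (r:ℕ) ∨ (i3:ℕ) = (r:ℕ)+1 ∨ (i3:ℕ) = (r:ℕ)+3 := by
    rcases zone (r := r) i3 with ⟨s, hs⟩ | h | h | h
    · exact absurd (hsm s i3 hs) (by have := hπlt s; omega)
    · exact Or.inl h
    · exact Or.inr (Or.inl h)
    · exact Or.inr (Or.inr h)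
  have key : (i1:ℕ) ≤ (r:ℕ)+1 → (i3:ℕ) = (r:ℕ)+3 → False := by
    intro hi1 hi3
    have hv3i := hA3 i3 hi3
    obtain ⟨s0, hp0, hv0'⟩ := hS i0 (by omega)
    have hs0 : (s0:ℕ) < (r:ℕ) ∧ (i0:ℕ) = (s0:ℕ) := by
      rcases P_cases hp0 with ⟨a,b⟩|⟨a,b⟩|⟨a,b⟩ <;> omega
    obtain ⟨s2, hp2, hv2'⟩ := hS i2 (by omega)
    have hs2 : (s2:ℕ) = (r:ℕ) := by
      rcases P_cases hp2 with ⟨a,b⟩|⟨a,b⟩|⟨a,b⟩ <;> omega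
    have : s2 = r := Fin.ext hs2
    subst this
    have := hB s0 hs0.1
    omega
  rcases big1 with h | h | h <;> rcases big3 with h' | h' | h'
  · omega
  · have := hA0 i1 h; have := hA1 i3 h'; omega
  · exact key (by omega) h'
  · omega
  · omega
  · exact key (by omega) h'
  · omega
  · omega
  · omega

include h312 hsm in
/-- `caseA` variant avoids 3142. -/
lemma caseA_no3142
    (hA0 : ∀ i : Fin (m+4), (i:ℕ) = (r:ℕ) → (σ i:ℕ) = m+2)
    (hA1 : ∀ i : Fin (m+4), (i:ℕ) = (r:ℕ)+1 → (σ i:ℕ) = m+3)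
    (hA3 : ∀ i : Fin (m+4), (i:ℕ) = (r:ℕ)+3 → (σ i:ℕ) = m+1) :
    ¬ ContainsPat p3142 σ := by
  rintro ⟨f, hf, hiff⟩
  obtain ⟨o01, o12, o23, w1, w2, w3⟩ := quad_3142 σ f hf hiff
  set i0 := f 0; set i1 := f 1; set i2 := f 2; set i3 := f 3
  rw [Fin.lt_def] at o01 o12 o23 w1 w2 w3
  have hπlt : ∀ s : Fin (m+1), (π s : ℕ) < m+1 := fun s => (π s).isLt
  have hS : ∀ i : Fin (m+4), (σ i:ℕ) < m+1 →
      ∃ s : Fin (m+1), (i:ℕ) = P (r:ℕ) (s:ℕ) ∧ (σ i:ℕ) = (π s:ℕ) := by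
    intro i h
    rcases small_of π r σ hsm i h with h' | h' | h' | h'
    · exact h'
    · exact absurd (hA0 i h') (by omega)
    · exact absurd (hA1 i h') (by omega)
    · exact absurd (hA3 i h') (by omega)
  have h312' : ¬ ((σ i0 : ℕ) < m+1) := by
    intro h0
    obtain ⟨s0, hp0, hv0'⟩ := hS i0 h0
    obtain ⟨s1, hp1, hv1'⟩ := hS i1 (by omega)
    obtain ⟨s3, hp3, hv3'⟩ := hS i3 (by omega)
    have hlt01 : (s0:ℕ) < (s1:ℕ) := by
      rcases P_cases hp0 with ⟨a,b⟩|⟨a,b⟩|⟨a,b⟩ <;>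
        rcases P_cases hp1 with ⟨c,d⟩|⟨c,d⟩|⟨c,d⟩ <;> omega
    have hlt13 : (s1:ℕ) < (s3:ℕ) := by
      rcases P_cases hp1 with ⟨a,b⟩|⟨a,b⟩|⟨a,b⟩ <;>
        rcases P_cases hp3 with ⟨c,d⟩|⟨c,d⟩|⟨c,d⟩ <;> omega
    exact h312 (contains312_of π s0 s1 s3 (Fin.lt_def.mpr hlt01) (Fin.lt_def.mpr hlt13)
      (Fin.lt_def.mpr (by omega)) (Fin.lt_def.mpr (by omega)))
  have hb2 : ¬ ((σ i2:ℕ) < m+1) := by omega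
  have big0 : (i0:ℕ) = (r:ℕ) ∨ (i0:ℕ) = (r:ℕ)+1 ∨ (i0:ℕ) = (r:ℕ)+3 := by
    rcases zone (r := r) i0 with ⟨s, hs⟩ | h | h | h
    · exact absurd (hsm s i0 hs) (by have := hπlt s; omega)
    · exact Or.inl h
    · exact Or.inr (Or.inl h)
    · exact Or.inr (Or.inr h)
  have big2 : (i2:ℕ) = (r:ℕ) ∨ (i2:ℕ) = (r:ℕ)+1 ∨ (i2:ℕ) = (r:ℕ)+3 := by
    rcases zone (r := r) i2 with ⟨s, hs⟩ | h | h | h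
    · exact absurd (hsm s i2 hs) (by have := hπlt s; omega)
    · exact Or.inl h
    · exact Or.inr (Or.inl h)
    · exact Or.inr (Or.inr h)
  rcases big0 with h | h | h <;> rcases big2 with h' | h' | h' <;>
    first
      | omega
      | (have := hA0 i0 h; have := hA1 i2 h'; omega)
      | (have := hA0 i0 h; have := hA3 i2 h'; omega)
      | (have := hA1 i0 h; have := hA3 i2 h'; omega)

include h213 hsm hV0 in
/-- the deleted-world variant (big values `m+1, m+3, m+2`) has no 2413 pattern
avoiding position `r+2`.  Here `hV1` is the value `m+3` at `r+1`. -/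
lemma q_no2413 (hW1 : ∀ i : Fin (m+4), (i:ℕ) = (r:ℕ)+1 → (σ i:ℕ) = m+3)
    (hW3 : ∀ i : Fin (m+4), (i:ℕ) = (r:ℕ)+3 → (σ i:ℕ) = m+2)
    (f : Fin 4 → Fin (m+4)) (hf : StrictMono f)
    (hiff : ∀ a b : Fin 4, p2413 a < p2413 b ↔ σ (f a) < σ (f b))
    (hex : ∀ t : Fin 4, ((f t):ℕ) ≠ (r:ℕ)+2) : False := by
  obtain ⟨o01, o12, o23, w1, w2, w3⟩ := quad_2413 σ f hf hiff
  set i0 := f 0; set i1 := f 1; set i2 := f 2; set i3 := f 3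
  rw [Fin.lt_def] at o01 o12 o23 w1 w2 w3
  have hπlt : ∀ s : Fin (m+1), (π s : ℕ) < m+1 := fun s => (π s).isLt
  have hS : ∀ i : Fin (m+4), (σ i:ℕ) < m+1 →
      ∃ s : Fin (m+1), (i:ℕ) = P (r:ℕ) (s:ℕ) ∧ (σ i:ℕ) = (π s:ℕ) := by
    intro i h
    rcases small_of π r σ hsm i h with h' | h' | h' | h'
    · exact h'
    · exact absurd (hV0 i h') (by omega)
    · exact absurd (hW1 i h') (by omega)
    · exact absurd (hW3 i h') (by omega)
  have h213' : ¬ ((σ i3 : ℕ) < m+1) := by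
    intro h3
    obtain ⟨s3, hp3, hv3'⟩ := hS i3 h3
    obtain ⟨s0, hp0, hv0'⟩ := hS i0 (by omega)
    obtain ⟨s2, hp2, hv2'⟩ := hS i2 (by omega)
    have hlt02 : (s0:ℕ) < (s2:ℕ) := by
      rcases P_cases hp0 with ⟨a,b⟩|⟨a,b⟩|⟨a,b⟩ <;>
        rcases P_cases hp2 with ⟨c,d⟩|⟨c,d⟩|⟨c,d⟩ <;> omega
    have hlt23 : (s2:ℕ) < (s3:ℕ) := by
      rcases P_cases hp2 with ⟨a,b⟩|⟨a,b⟩|⟨a,b⟩ <;>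
        rcases P_cases hp3 with ⟨c,d⟩|⟨c,d⟩|⟨c,d⟩ <;> omega
    exact h213 (contains213_of π s0 s2 s3 (Fin.lt_def.mpr hlt02) (Fin.lt_def.mpr hlt23)
      (Fin.lt_def.mpr (by omega)) (Fin.lt_def.mpr (by omega)))
  have hb1 : ¬ ((σ i1:ℕ) < m+1) := by omega
  have big1 : (i1:ℕ) = (r:ℕ) ∨ (i1:ℕ) = (r:ℕ)+1 ∨ (i1:ℕ) = (r:ℕ)+3 := by
    rcases zone (r := r) i1 with ⟨s, hs⟩ | h | h | h
    · exact absurd (hsm s i1 hs) (by have := hπlt s; omega)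
    · exact Or.inl h
    · exact Or.inr (Or.inl h)
    · exact Or.inr (Or.inr h)
  have big3 : (i3:ℕ) = (r:ℕ) ∨ (i3:ℕ) = (r:ℕ)+1 ∨ (i3:ℕ) = (r:ℕ)+3 := by
    rcases zone (r := r) i3 with ⟨s, hs⟩ | h | h | h
    · exact absurd (hsm s i3 hs) (by have := hπlt s; omega)
    · exact Or.inl h
    · exact Or.inr (Or.inl h)
    · exact Or.inr (Or.inr h)
  have hx2 := hex 2
  rcases big1 with h | h | h <;> rcases big3 with h' | h' | h' <;>
    first
      | omega
      | (have := hV0 i1 h; have := hW1 i3 h'; omega)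
      | (have := hV0 i1 h; have := hW3 i3 h'; omega)
      | (have := hW1 i1 h; have := hW3 i3 h'; omega)

include h312 hsm hV0 in
/-- the deleted-world variant has no 3142 pattern avoiding position `r+2`. -/
lemma q_no3142 (hW1 : ∀ i : Fin (m+4), (i:ℕ) = (r:ℕ)+1 → (σ i:ℕ) = m+3)
    (hW3 : ∀ i : Fin (m+4), (i:ℕ) = (r:ℕ)+3 → (σ i:ℕ) = m+2)
    (f : Fin 4 → Fin (m+4)) (hf : StrictMono f)
    (hiff : ∀ a b : Fin 4, p3142 a < p3142 b ↔ σ (f a) < σ (f b))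
    (hex : ∀ t : Fin 4, ((f t):ℕ) ≠ (r:ℕ)+2) : False := by
  obtain ⟨o01, o12, o23, w1, w2, w3⟩ := quad_3142 σ f hf hiff
  set i0 := f 0; set i1 := f 1; set i2 := f 2; set i3 := f 3
  rw [Fin.lt_def] at o01 o12 o23 w1 w2 w3
  have hπlt : ∀ s : Fin (m+1), (π s : ℕ) < m+1 := fun s => (π s).isLt
  have hS : ∀ i : Fin (m+4), (σ i:ℕ) < m+1 →
      ∃ s : Fin (m+1), (i:ℕ) = P (r:ℕ) (s:ℕ) ∧ (σ i:ℕ) = (π s:ℕ) := by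
    intro i h
    rcases small_of π r σ hsm i h with h' | h' | h' | h'
    · exact h'
    · exact absurd (hV0 i h') (by omega)
    · exact absurd (hW1 i h') (by omega)
    · exact absurd (hW3 i h') (by omega)
  have h312' : ¬ ((σ i0 : ℕ) < m+1) := by
    intro h0
    obtain ⟨s0, hp0, hv0'⟩ := hS i0 h0
    obtain ⟨s1, hp1, hv1'⟩ := hS i1 (by omega)
    obtain ⟨s3, hp3, hv3'⟩ := hS i3 (by omega)
    have hlt01 : (s0:ℕ) < (s1:ℕ) := by
      rcases P_cases hp0 with ⟨a,b⟩|⟨a,b⟩|⟨a,b⟩ <;>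
        rcases P_cases hp1 with ⟨c,d⟩|⟨c,d⟩|⟨c,d⟩ <;> omega
    have hlt13 : (s1:ℕ) < (s3:ℕ) := by
      rcases P_cases hp1 with ⟨a,b⟩|⟨a,b⟩|⟨a,b⟩ <;>
        rcases P_cases hp3 with ⟨c,d⟩|⟨c,d⟩|⟨c,d⟩ <;> omega
    exact h312 (contains312_of π s0 s1 s3 (Fin.lt_def.mpr hlt01) (Fin.lt_def.mpr hlt13)
      (Fin.lt_def.mpr (by omega)) (Fin.lt_def.mpr (by omega)))
  have hb2 : ¬ ((σ i2:ℕ) < m+1) := by omega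
  have big0 : (i0:ℕ) = (r:ℕ) ∨ (i0:ℕ) = (r:ℕ)+1 ∨ (i0:ℕ) = (r:ℕ)+3 := by
    rcases zone (r := r) i0 with ⟨s, hs⟩ | h | h | h
    · exact absurd (hsm s i0 hs) (by have := hπlt s; omega)
    · exact Or.inl h
    · exact Or.inr (Or.inl h)
    · exact Or.inr (Or.inr h)
  have big2 : (i2:ℕ) = (r:ℕ) ∨ (i2:ℕ) = (r:ℕ)+1 ∨ (i2:ℕ) = (r:ℕ)+3 := by
    rcases zone (r := r) i2 with ⟨s, hs⟩ | h | h | h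
    · exact absurd (hsm s i2 hs) (by have := hπlt s; omega)
    · exact Or.inl h
    · exact Or.inr (Or.inl h)
    · exact Or.inr (Or.inr h)
  have hx1 := hex 1
  have key : (i0:ℕ) = (r:ℕ) → (i2:ℕ) = (r:ℕ)+3 → False := by
    intro h0 h2
    have hv0i := hV0 i0 h0
    obtain ⟨s1, hp1, hv1'⟩ := hS i1 (by omega)
    rcases P_cases hp1 with ⟨a,b⟩|⟨a,b⟩|⟨a,b⟩ <;> omega
  rcases big0 with h | h | h <;> rcases big2 with h' | h' | h'
  · omega
  · omega
  · exact key h h'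
  · omega
  · omega
  · have := hW1 i0 h; have := hW3 i2 h'; omega
  · omega
  · omega
  · omega



include h213 h312 in
lemma hB_of_exists (hEx : ∃ j : Fin (m+1), (r:ℕ) < (j:ℕ) ∧ ((π r):ℕ) < ((π j):ℕ)) :
    ∀ i : Fin (m+1), (i:ℕ) < (r:ℕ) → ((π i):ℕ) < ((π r):ℕ) := by
  obtain ⟨j, hj1, hj2⟩ := hEx
  intro i hi
  by_contra hni
  have hne : ((π i):ℕ) ≠ ((π r):ℕ) := by
    intro h
    have h2 : i = r := π.injective (Fin.ext h)
    have := congrArg Fin.val h2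
    omega
  have hir : ((π r):ℕ) < ((π i):ℕ) := by omega
  rcases lt_trichotomy ((π i):ℕ) ((π j):ℕ) with h | h | h
  · exact h213 (contains213_of π i r j (Fin.lt_def.mpr hi) (Fin.lt_def.mpr hj1)
      (Fin.lt_def.mpr hir) (Fin.lt_def.mpr h))
  · have h2 : i = j := π.injective (Fin.ext h)
    have := congrArg Fin.val h2
    omega
  · exact h312 (contains312_of π i r j (Fin.lt_def.mpr hi) (Fin.lt_def.mpr hj1)
      (Fin.lt_def.mpr hj2) (Fin.lt_def.mpr h))

end Core

lemma del_positional (π : Equiv.Perm (Fin (m+1))) (r : Fin (m+1))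
    (σ4 : Equiv.Perm (Fin (m+4)))
    (hsm : ∀ (s : Fin (m+1)) (i : Fin (m+4)), (i:ℕ) = P (r:ℕ) (s:ℕ) → (σ4 i:ℕ) = ((π s):ℕ))
    (pos : Fin (m+4)) (hpos : (pos:ℕ) = (r:ℕ)+2) :
    ∀ (s : Fin m) (i : Fin (m+3)), (i:ℕ) = P' (r:ℕ) (s:ℕ) →
      ((del σ4 pos) i : ℕ) = ((delEntry π r) s : ℕ) := by
  intro s i hi
  have hr := r.isLt; have hsv := s.isLt
  have hvpos : (σ4 pos : ℕ) = ((π r) : ℕ) := by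
    apply hsm r pos
    rw [hpos]; unfold P; split_ifs <;> omega
  have hb1 := del_bridge σ4 pos i
  have hb2 := del_bridge π r s
  have hsa2 : ((r.succAbove s) : ℕ) = if (s:ℕ) < (r:ℕ) then (s:ℕ) else (s:ℕ)+1 :=
    succAbove_val r s
  have hmatch : ((pos.succAbove i):ℕ) = P (r:ℕ) ((r.succAbove s : Fin (m+1)):ℕ) := by
    rw [succAbove_val pos i, hsa2, hpos]
    unfold P' at hi; unfold P
    split_ifs at hi ⊢ <;> omega
  have hval4 : (σ4 (pos.succAbove i) : ℕ) = ((π (r.succAbove s)) : ℕ) :=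
    hsm (r.succAbove s) _ hmatch
  have e1 : (σ4 (pos.succAbove i) : ℕ) = (((σ4 pos).succAbove (del σ4 pos i)) : ℕ) :=
    congrArg Fin.val hb1
  have e2 : ((π (r.succAbove s)) : ℕ) = (((π r).succAbove (del π r s)) : ℕ) :=
    congrArg Fin.val hb2
  rw [succAbove_val] at e1 e2
  have hde : delEntry π r = del π r := rfl
  rw [hde]
  have hlt1 := (del σ4 pos i).isLt
  have hlt2 := (del π r s).isLt
  split_ifs at e1 e2 <;> omega

lemma mem_avB {N : ℕ} (p : Equiv.Perm (Fin N)) :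
    ((⟨N, p⟩ : PermAny) ∈ AvSet ({⟨4, p2413⟩, ⟨4, p3142⟩} : Set PermAny)) ↔
      (¬ ContainsPat p2413 p ∧ ¬ ContainsPat p3142 p) := by
  constructor
  · intro h
    exact ⟨h ⟨4, p2413⟩ (by simp), h ⟨4, p3142⟩ (by simp)⟩
  · rintro ⟨h1, h2⟩ b hb
    rcases hb with rfl | hb
    · exact h1
    · rw [Set.mem_singleton_iff] at hb
      subst hb
      exact h2

lemma finCongr_val {N M : ℕ} (h : N = M) (x : Fin N) : ((finCongr h x):ℕ) = (x:ℕ) := by simp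

lemma finCongr_symm_val {N M : ℕ} (h : N = M) (x : Fin M) :
    (((finCongr h).symm x):ℕ) = (x:ℕ) := by simp

lemma permCongr_val2 {N M : ℕ} (h : N = M) (σ : Equiv.Perm (Fin N)) (x : Fin M) :
    (((finCongr h).permCongr σ) x : ℕ) = (σ ((finCongr h).symm x) : ℕ) := by
  rw [Equiv.permCongr_apply]
  exact finCongr_val h _

lemma sum_indicator {n : ℕ} (S : Finset (Fin n)) (c : Fin n) (v : ℕ) :
    ∑ j ∈ S, (if (j:ℕ) = (c:ℕ) then v else 0) = if c ∈ S then v else 0 := by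
  have h : ∀ j : Fin n, (if (j:ℕ) = (c:ℕ) then v else 0) = (if j = c then v else 0) := by
    intro j
    by_cases h : j = c
    · subst h; simp
    · rw [if_neg h, if_neg (fun hc => h (Fin.ext hc))]
  simp_rw [h]
  exact Finset.sum_ite_eq' S c (fun _ => v)

def gvec (r : Fin (m+1)) : Fin (m+2) → ℕ :=
  fun j => if (j:ℕ) = (r:ℕ) then 2 else if (j:ℕ) = (r:ℕ)+1 then 1 else 0

lemma gvec_split (r : Fin (m+1)) (j : Fin (m+2)) :
    gvec r j = (if (j:ℕ) = ((r.castSucc : Fin (m+2)):ℕ) then 2 else 0)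
      + (if (j:ℕ) = ((r.succ : Fin (m+2)):ℕ) then 1 else 0) := by
  unfold gvec
  simp only [Fin.coe_castSucc, Fin.val_succ]
  split_ifs <;> omega

lemma gvec_sum (r : Fin (m+1)) : ∑ j, gvec r j = 3 := by
  simp_rw [gvec_split r, Finset.sum_add_distrib, sum_indicator]
  simp

lemma gvec_filter (r : Fin (m+1)) (s : Fin (m+1)) :
    (∑ j ∈ Finset.univ.filter (fun j : Fin (m+2) => (j:ℕ) ≤ (s:ℕ)), gvec r j) + (s:ℕ)
      = P (r:ℕ) (s:ℕ) := by
  simp_rw [gvec_split r, Finset.sum_add_distrib, sum_indicator]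
  simp only [Finset.mem_filter, Finset.mem_univ, true_and, Fin.coe_castSucc, Fin.val_succ]
  unfold P
  split_ifs <;> omega

lemma delGap_gvec (r : Fin (m+1)) :
    delGap (gvec r) r = fun j : Fin (m+1) => if (j:ℕ) = (r:ℕ) then 3 else 0 := by
  funext j
  have hj := j.isLt; have hr := r.isLt
  unfold delGap gvec
  simp only [Fin.coe_castSucc, Fin.val_succ]
  split_ifs <;> omega

lemma delGap_sum (r : Fin (m+1)) : ∑ j, delGap (gvec r) r j = 3 := by
  rw [delGap_gvec r]
  rw [show (∑ j : Fin (m+1), (if (j:ℕ) = (r:ℕ) then 3 else 0)) = _ from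
    sum_indicator Finset.univ r 3]
  simp

lemma delGap_filter (r : Fin (m+1)) (s : Fin m) :
    (∑ j ∈ Finset.univ.filter (fun j : Fin (m+1) => (j:ℕ) ≤ (s:ℕ)), delGap (gvec r) r j)
      + (s:ℕ) = P' (r:ℕ) (s:ℕ) := by
  rw [delGap_gvec r]
  rw [show (∑ j ∈ Finset.univ.filter (fun j : Fin (m+1) => (j:ℕ) ≤ (s:ℕ)),
      (if (j:ℕ) = (r:ℕ) then 3 else 0)) = _ from sum_indicator _ r 3]
  simp only [Finset.mem_filter, Finset.mem_univ, true_and]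
  unfold P'
  split_ifs <;> omega


end ES9

/-- For every `k ≥ 1` (here `k = m + 1`), every permutation of
length `k` avoiding both 213 and 312 is ES⁺-irreducible with respect to
`B = {2413, 3142}`. -/
theorem av213_312_esPlus_irreducible_separable
    (m : ℕ) (π : Equiv.Perm (Fin (m + 1)))
    (h213 : ¬ ContainsPat p213 π) (h312 : ¬ ContainsPat p312 π) (r : Fin (m + 1)) :
    ¬ ESPlusRed ({⟨4, p2413⟩, ⟨4, p3142⟩} : Set PermAny) π r := by
  classical
  intro hred
  have hr := r.isLt
  have hsum : (∑ j, ES9.gvec r j) = 3 := ES9.gvec_sum r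
  have hsumd : (∑ j, delGap (ES9.gvec r) r j) = 3 := ES9.delGap_sum r
  have e1 : m + 1 + (∑ j, ES9.gvec r j) = m + 4 := by omega
  have e2 : m + (∑ j, delGap (ES9.gvec r) r j) = m + 3 := by omega
  let T1 := (finCongr e1).permCongr
  let T2 := (finCongr e2).permCongr
  have hPr : (r:ℕ) + 2 = ES9.P (r:ℕ) (r:ℕ) := by unfold ES9.P; split_ifs <;> omega
  -- membership characterization for the long world
  have hmemZ : ∀ σ : Equiv.Perm (Fin (m + 1 + ∑ j, ES9.gvec r j)),
      σ ∈ ZSet ({⟨4, p2413⟩, ⟨4, p3142⟩} : Set PermAny) π (ES9.gvec r) ↔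
      ((¬ ContainsPat p2413 (T1 σ) ∧ ¬ ContainsPat p3142 (T1 σ)) ∧
        ∀ (s : Fin (m+1)) (i4 : Fin (m+4)), (i4:ℕ) = ES9.P (r:ℕ) (s:ℕ) →
          ((T1 σ) i4 : ℕ) = ((π s):ℕ)) := by
    intro σ
    constructor
    · rintro ⟨hav, hposn⟩
      have hav' := (ES9.mem_avB σ).mp hav
      refine ⟨⟨fun hc => hav'.1 ((ES9.containsPat_finCongr e1 p2413 σ).mp hc),
              fun hc => hav'.2 ((ES9.containsPat_finCongr e1 p3142 σ).mp hc)⟩, ?_⟩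
      intro s i4 hi4
      have key := hposn s ((finCongr e1).symm i4)
        (by rw [ES9.finCongr_symm_val e1 i4, hi4, ← ES9.gvec_filter r s])
      rw [ES9.permCongr_val2 e1 σ i4]
      exact key
    · rintro ⟨⟨ha1, ha2⟩, hpos4⟩
      refine ⟨(ES9.mem_avB σ).mpr
        ⟨fun hc => ha1 ((ES9.containsPat_finCongr e1 p2413 σ).mpr hc),
         fun hc => ha2 ((ES9.containsPat_finCongr e1 p3142 σ).mpr hc)⟩, ?_⟩
      intro s i hi
      have key := hpos4 s (finCongr e1 i)
        (by rw [ES9.finCongr_val e1 i, hi]; exact ES9.gvec_filter r s)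
      rw [ES9.permCongr_val2 e1 σ (finCongr e1 i), Equiv.symm_apply_apply] at key
      exact key
  -- membership characterization for the deleted world
  have hmemZd : ∀ τ : Equiv.Perm (Fin (m + ∑ j, delGap (ES9.gvec r) r j)),
      τ ∈ ZSet ({⟨4, p2413⟩, ⟨4, p3142⟩} : Set PermAny) (delEntry π r)
        (delGap (ES9.gvec r) r) ↔
      ((¬ ContainsPat p2413 (T2 τ) ∧ ¬ ContainsPat p3142 (T2 τ)) ∧
        ∀ (s : Fin m) (i3 : Fin (m+3)), (i3:ℕ) = ES9.P' (r:ℕ) (s:ℕ) →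
          ((T2 τ) i3 : ℕ) = (((delEntry π r) s):ℕ)) := by
    intro τ
    constructor
    · rintro ⟨hav, hposn⟩
      have hav' := (ES9.mem_avB τ).mp hav
      refine ⟨⟨fun hc => hav'.1 ((ES9.containsPat_finCongr e2 p2413 τ).mp hc),
              fun hc => hav'.2 ((ES9.containsPat_finCongr e2 p3142 τ).mp hc)⟩, ?_⟩
      intro s i3 hi3
      have key := hposn s ((finCongr e2).symm i3)
        (by rw [ES9.finCongr_symm_val e2 i3, hi3, ← ES9.delGap_filter r s])
      rw [ES9.permCongr_val2 e2 τ i3]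
      exact key
    · rintro ⟨⟨ha1, ha2⟩, hpos3⟩
      refine ⟨(ES9.mem_avB τ).mpr
        ⟨fun hc => ha1 ((ES9.containsPat_finCongr e2 p2413 τ).mpr hc),
         fun hc => ha2 ((ES9.containsPat_finCongr e2 p3142 τ).mpr hc)⟩, ?_⟩
      intro s i hi
      have key := hpos3 s (finCongr e2 i)
        (by rw [ES9.finCongr_val e2 i, hi]; exact ES9.delGap_filter r s)
      rw [ES9.permCongr_val2 e2 τ (finCongr e2 i), Equiv.symm_apply_apply] at key
      exact key
  -- the bad permutation pb (big values m+1, m+3, m+2)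
  let b0 : Fin (m+4) := ⟨m+1, by omega⟩
  let b1 : Fin (m+4) := ⟨m+3, by omega⟩
  let b3 : Fin (m+4) := ⟨m+2, by omega⟩
  have hb0v : (b0:ℕ) = m+1 := rfl
  have hb1v : (b1:ℕ) = m+3 := rfl
  have hb3v : (b3:ℕ) = m+2 := rfl
  let pb : Equiv.Perm (Fin (m+4)) := Equiv.ofBijective _
    (ES9.pbF_bij π r b0 b1 b3 (by rw [hb0v]) (by rw [hb1v]; omega) (by rw [hb3v]; omega)
      (by rw [hb0v, hb1v]; omega) (by rw [hb0v, hb3v]; omega) (by rw [hb1v, hb3v]; omega))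
  have pb_sm : ∀ (s : Fin (m+1)) (i : Fin (m+4)), (i:ℕ) = ES9.P (r:ℕ) (s:ℕ) →
      ((pb i):ℕ) = ((π s):ℕ) := fun s i h => ES9.pbF_small s i h
  have pb_v0 : ∀ i : Fin (m+4), (i:ℕ) = (r:ℕ) → ((pb i):ℕ) = m+1 :=
    fun i h => congrArg Fin.val (ES9.pbF_b0 i h)
  have pb_v1 : ∀ i : Fin (m+4), (i:ℕ) = (r:ℕ)+1 → ((pb i):ℕ) = m+3 :=
    fun i h => congrArg Fin.val (ES9.pbF_b1 i h)
  have pb_v3 : ∀ i : Fin (m+4), (i:ℕ) = (r:ℕ)+3 → ((pb i):ℕ) = m+2 :=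
    fun i h => congrArg Fin.val (ES9.pbF_b3 i h)
  let pos : Fin (m+4) := ⟨(r:ℕ)+2, by omega⟩
  have hposval : (pos:ℕ) = (r:ℕ)+2 := rfl
  have pbcontains : ContainsPat p2413 pb := by
    have hπr := (π r).isLt
    let x0 : Fin (m+4) := ⟨(r:ℕ), by omega⟩
    let x1 : Fin (m+4) := ⟨(r:ℕ)+1, by omega⟩
    let x2 : Fin (m+4) := ⟨(r:ℕ)+2, by omega⟩
    let x3 : Fin (m+4) := ⟨(r:ℕ)+3, by omega⟩
    have v0 : ((pb x0):ℕ) = m+1 := pb_v0 x0 rfl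
    have v1 : ((pb x1):ℕ) = m+3 := pb_v1 x1 rfl
    have v2 : ((pb x2):ℕ) = ((π r):ℕ) := pb_sm r x2 hPr
    have v3 : ((pb x3):ℕ) = m+2 := pb_v3 x3 rfl
    exact ES9.contains2413_of pb x0 x1 x2 x3
      (Fin.mk_lt_mk.mpr (by omega)) (Fin.mk_lt_mk.mpr (by omega)) (Fin.mk_lt_mk.mpr (by omega))
      (Fin.lt_def.mpr (by omega)) (Fin.lt_def.mpr (by omega)) (Fin.lt_def.mpr (by omega))
  -- q0 ∈ Zd
  let q0 : Equiv.Perm (Fin (m + ∑ j, delGap (ES9.gvec r) r j)) := T2.symm (ES9.del pb pos)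
  have hq0 : q0 ∈ ZSet ({⟨4, p2413⟩, ⟨4, p3142⟩} : Set PermAny) (delEntry π r)
      (delGap (ES9.gvec r) r) := by
    apply (hmemZd q0).mpr
    have hT2q : T2 q0 = ES9.del pb pos := Equiv.apply_symm_apply _ _
    rw [hT2q]
    refine ⟨⟨?_, ?_⟩, ES9.del_positional π r pb pb_sm pos hposval⟩
    · intro hc
      obtain ⟨f, hf, hex, hiff⟩ := ES9.containsPat_del p2413 pb pos hc
      exact ES9.q_no2413 π r h213 pb pb_sm pb_v0 pb_v1 pb_v3 f hf hiff
        (fun t h => hex t (Fin.ext h))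
    · intro hc
      obtain ⟨f, hf, hex, hiff⟩ := ES9.containsPat_del p3142 pb pos hc
      exact ES9.q_no3142 π r h312 pb pb_sm pb_v0 pb_v1 pb_v3 f hf hiff
        (fun t h => hex t (Fin.ext h))
  -- the deletion map
  let D : Equiv.Perm (Fin (m + 1 + ∑ j, ES9.gvec r j)) →
      Equiv.Perm (Fin (m + ∑ j, delGap (ES9.gvec r) r j)) :=
    fun σ => T2.symm (ES9.del (T1 σ) pos)
  have hDmem : ∀ σ ∈ ZSet ({⟨4, p2413⟩, ⟨4, p3142⟩} : Set PermAny) π (ES9.gvec r),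
      D σ ∈ ZSet ({⟨4, p2413⟩, ⟨4, p3142⟩} : Set PermAny) (delEntry π r)
        (delGap (ES9.gvec r) r) := by
    intro σ hσ
    obtain ⟨⟨ha1, ha2⟩, hp4⟩ := (hmemZ σ).mp hσ
    apply (hmemZd (D σ)).mpr
    have hT2D : T2 (D σ) = ES9.del (T1 σ) pos := Equiv.apply_symm_apply _ _
    rw [hT2D]
    refine ⟨⟨?_, ?_⟩, ES9.del_positional π r (T1 σ) hp4 pos hposval⟩
    · intro hc
      obtain ⟨f, hf, _, hiff⟩ := ES9.containsPat_del p2413 (T1 σ) pos hc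
      exact ha1 ⟨f, hf, hiff⟩
    · intro hc
      obtain ⟨f, hf, _, hiff⟩ := ES9.containsPat_del p3142 (T1 σ) pos hc
      exact ha2 ⟨f, hf, hiff⟩
  have hDinj : Set.InjOn D (ZSet ({⟨4, p2413⟩, ⟨4, p3142⟩} : Set PermAny) π (ES9.gvec r)) := by
    intro σ hσ τ hτ hDeq
    have h1 : ES9.del (T1 σ) pos = ES9.del (T1 τ) pos := by
      have h := congrArg T2 hDeq
      rwa [Equiv.apply_symm_apply, Equiv.apply_symm_apply] at h
    have hvσ : ((T1 σ) pos : ℕ) = ((π r):ℕ) := ((hmemZ σ).mp hσ).2 r pos hPr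
    have hvτ : ((T1 τ) pos : ℕ) = ((π r):ℕ) := ((hmemZ τ).mp hτ).2 r pos hPr
    have h2 : (T1 σ) pos = (T1 τ) pos := Fin.ext (by omega)
    have h3 : T1 σ = T1 τ := ES9.del_inj _ _ pos h2 h1
    exact T1.injective h3
  have hq0notin : q0 ∉ D '' (ZSet ({⟨4, p2413⟩, ⟨4, p3142⟩} : Set PermAny) π (ES9.gvec r)) := by
    rintro ⟨σ, hσ, hDq⟩
    have h1 : ES9.del (T1 σ) pos = ES9.del pb pos := by
      have h := congrArg T2 hDq
      rwa [Equiv.apply_symm_apply, Equiv.apply_symm_apply] at h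
    have hvσ : ((T1 σ) pos : ℕ) = ((π r):ℕ) := ((hmemZ σ).mp hσ).2 r pos hPr
    have hvpb : ((pb pos):ℕ) = ((π r):ℕ) := pb_sm r pos hPr
    have h2 : (T1 σ) pos = pb pos := Fin.ext (by omega)
    have h3 : T1 σ = pb := ES9.del_inj _ _ pos h2 h1
    have hav := ((hmemZ σ).mp hσ).1.1
    rw [h3] at hav
    exact hav pbcontains
  -- nonemptiness of Z
  have hZne : (ZSet ({⟨4, p2413⟩, ⟨4, p3142⟩} : Set PermAny) π (ES9.gvec r)).Nonempty := by
    by_cases hEx : ∃ j : Fin (m+1), (r:ℕ) < (j:ℕ) ∧ ((π r):ℕ) < ((π j):ℕ)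
    · -- there is a later bigger entry: big values (m+2, m+3, m+1)
      let c0 : Fin (m+4) := ⟨m+2, by omega⟩
      let c1 : Fin (m+4) := ⟨m+3, by omega⟩
      let c3 : Fin (m+4) := ⟨m+1, by omega⟩
      have hc0v : (c0:ℕ) = m+2 := rfl
      have hc1v : (c1:ℕ) = m+3 := rfl
      have hc3v : (c3:ℕ) = m+1 := rfl
      let sg : Equiv.Perm (Fin (m+4)) := Equiv.ofBijective _
        (ES9.pbF_bij π r c0 c1 c3 (by rw [hc0v]; omega) (by rw [hc1v]; omega)
          (by rw [hc3v]) (by rw [hc0v, hc1v]; omega) (by rw [hc0v, hc3v]; omega)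
          (by rw [hc1v, hc3v]; omega))
      have sg_sm : ∀ (s : Fin (m+1)) (i : Fin (m+4)), (i:ℕ) = ES9.P (r:ℕ) (s:ℕ) →
          ((sg i):ℕ) = ((π s):ℕ) := fun s i h => ES9.pbF_small s i h
      have sg_v0 : ∀ i : Fin (m+4), (i:ℕ) = (r:ℕ) → ((sg i):ℕ) = m+2 :=
        fun i h => congrArg Fin.val (ES9.pbF_b0 i h)
      have sg_v1 : ∀ i : Fin (m+4), (i:ℕ) = (r:ℕ)+1 → ((sg i):ℕ) = m+3 :=
        fun i h => congrArg Fin.val (ES9.pbF_b1 i h)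
      have sg_v3 : ∀ i : Fin (m+4), (i:ℕ) = (r:ℕ)+3 → ((sg i):ℕ) = m+1 :=
        fun i h => congrArg Fin.val (ES9.pbF_b3 i h)
      have hB := ES9.hB_of_exists π r h213 h312 hEx
      refine ⟨T1.symm sg, (hmemZ (T1.symm sg)).mpr ?_⟩
      rw [Equiv.apply_symm_apply]
      exact ⟨⟨ES9.caseA_no2413 π r h213 sg sg_sm hB sg_v0 sg_v1 sg_v3,
        ES9.caseA_no3142 π r h312 sg sg_sm sg_v0 sg_v1 sg_v3⟩, sg_sm⟩
    · -- no later bigger entry: ascending big values (m+1, m+2, m+3)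
      push_neg at hEx
      have hA : ∀ j : Fin (m+1), (r:ℕ) < (j:ℕ) → ((π j):ℕ) < ((π r):ℕ) := by
        intro j hj
        have h1 := hEx j hj
        have hne : ((π j):ℕ) ≠ ((π r):ℕ) := by
          intro h
          have h2 : j = r := π.injective (Fin.ext h)
          have := congrArg Fin.val h2
          omega
        omega
      let c0 : Fin (m+4) := ⟨m+1, by omega⟩
      let c1 : Fin (m+4) := ⟨m+2, by omega⟩
      let c3 : Fin (m+4) := ⟨m+3, by omega⟩
      have hc0v : (c0:ℕ) = m+1 := rfl
      have hc1v : (c1:ℕ) = m+2 := rfl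
      have hc3v : (c3:ℕ) = m+3 := rfl
      let sg : Equiv.Perm (Fin (m+4)) := Equiv.ofBijective _
        (ES9.pbF_bij π r c0 c1 c3 (by rw [hc0v]) (by rw [hc1v]; omega)
          (by rw [hc3v]; omega) (by rw [hc0v, hc1v]; omega) (by rw [hc0v, hc3v]; omega)
          (by rw [hc1v, hc3v]; omega))
      have sg_sm : ∀ (s : Fin (m+1)) (i : Fin (m+4)), (i:ℕ) = ES9.P (r:ℕ) (s:ℕ) →
          ((sg i):ℕ) = ((π s):ℕ) := fun s i h => ES9.pbF_small s i h
      have sg_v0 : ∀ i : Fin (m+4), (i:ℕ) = (r:ℕ) → ((sg i):ℕ) = m+1 :=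
        fun i h => congrArg Fin.val (ES9.pbF_b0 i h)
      have sg_v1 : ∀ i : Fin (m+4), (i:ℕ) = (r:ℕ)+1 → ((sg i):ℕ) = m+2 :=
        fun i h => congrArg Fin.val (ES9.pbF_b1 i h)
      have sg_v3 : ∀ i : Fin (m+4), (i:ℕ) = (r:ℕ)+3 → ((sg i):ℕ) = m+3 :=
        fun i h => congrArg Fin.val (ES9.pbF_b3 i h)
      refine ⟨T1.symm sg, (hmemZ (T1.symm sg)).mpr ?_⟩
      rw [Equiv.apply_symm_apply]
      exact ⟨⟨ES9.asc_no2413 π r h213 sg sg_sm sg_v0 sg_v1 sg_v3,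
        ES9.asc_no3142 π r h312 sg sg_sm sg_v0 sg_v1 sg_v3 hA⟩, sg_sm⟩
  -- counting
  have himg : D '' (ZSet ({⟨4, p2413⟩, ⟨4, p3142⟩} : Set PermAny) π (ES9.gvec r)) ⊆
      ZSet ({⟨4, p2413⟩, ⟨4, p3142⟩} : Set PermAny) (delEntry π r) (delGap (ES9.gvec r) r) := by
    rintro _ ⟨σ, hσ, rfl⟩
    exact hDmem σ hσ
  have hss : D '' (ZSet ({⟨4, p2413⟩, ⟨4, p3142⟩} : Set PermAny) π (ES9.gvec r)) ⊂
      ZSet ({⟨4, p2413⟩, ⟨4, p3142⟩} : Set PermAny) (delEntry π r) (delGap (ES9.gvec r) r) :=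
    (Set.ssubset_iff_of_subset himg).mpr ⟨q0, hq0, hq0notin⟩
  have h1 := Set.ncard_image_of_injOn hDinj
  have h2 := Set.ncard_lt_ncard hss (Set.toFinite _)
  have h3 := hred (ES9.gvec r) hZne
  omega
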